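/- Every Sugeno integral on a completely distributive lattice is homogeneous: if F: L^A → L is an idempotent polynomial functional, then for every c ∈ L and every f ∈ L^A, F(c ∧ f) = c ∧ F(f) and F(c ∨ f) = c ∨ F(f), where (c ∧ f)(x) = c ∧ f(x) and (c ∨ f)(x) = c ∨ f(x). -/
import Mathlib


/-- Polynomial functionals on `L^A`. -/
inductive IsPolyFunc (L : Type*) [CompleteLattice L] (A : Type*) :
    ((A → L) → L) → Prop
  | proj (a : A) : IsPolyFunc L A (fun f => f a)
  | const (c : L) : IsPolyFunc L A (fun _ => c)
  | inf {ι : Type*} (G : ι → (A → L) → L) (h : ∀ i, IsPolyFunc L A (G i)) :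
      IsPolyFunc L A (fun f => ⨅ i, G i f)
  | sup {ι : Type*} (G : ι → (A → L) → L) (h : ∀ i, IsPolyFunc L A (G i)) :
      IsPolyFunc L A (fun f => ⨆ i, G i f)

theorem IsPolyFunc.mono {L A : Type*} [CompleteLattice L] {F : (A → L) → L}
    (hF : IsPolyFunc L A F) {f g : A → L} (hfg : ∀ a, f a ≤ g a) : F f ≤ F g := by
  induction hF with
  | proj a => exact hfg a
  | const c => exact le_rfl
  | inf G h ih => exact iInf_mono fun i => ih i
  | sup G h ih => exact iSup_mono fun i => ih i

theorem IsPolyFunc.inf_le {L A : Type*} [CompletelyDistribLattice L] {F : (A → L) → L}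
    (hF : IsPolyFunc L A F) (c : L) (f : A → L) :
    c ⊓ F f ≤ F (fun x => c ⊓ f x) := by
  induction hF with
  | proj a => exact le_rfl
  | const d => exact inf_le_right
  | inf G h ih =>
    exact le_iInf fun i => le_trans (inf_le_inf_left c (iInf_le _ i)) (ih i)
  | sup G h ih =>
    rw [inf_iSup_eq]
    exact iSup_mono fun i => ih i

theorem IsPolyFunc.le_sup {L A : Type*} [CompletelyDistribLattice L] {F : (A → L) → L}
    (hF : IsPolyFunc L A F) (c : L) (f : A → L) :
    F (fun x => c ⊔ f x) ≤ c ⊔ F f := by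
  induction hF with
  | proj a => exact le_rfl
  | const d => exact le_sup_right
  | inf G h ih =>
    rw [sup_iInf_eq]
    exact iInf_mono fun i => ih i
  | sup G h ih =>
    exact iSup_le fun i => le_trans (ih i) (sup_le_sup_left (le_iSup (fun j => G j f) i) c)

theorem sugeno_homogeneous {L A : Type*} [CompletelyDistribLattice L] [Nonempty A]
    (F : (A → L) → L) (hF : IsPolyFunc L A F)
    (hid : ∀ c : L, F (fun _ => c) = c) :
    ∀ (c : L) (f : A → L),
      F (fun x => c ⊓ f x) = c ⊓ F f ∧ F (fun x => c ⊔ f x) = c ⊔ F f := by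
  intro c f
  constructor
  · refine le_antisymm (le_inf ?_ ?_) (hF.inf_le c f)
    · calc F (fun x => c ⊓ f x) ≤ F (fun _ => c) := hF.mono fun a => inf_le_left
        _ = c := hid c
    · exact hF.mono fun a => inf_le_right
  · refine le_antisymm (hF.le_sup c f) (sup_le ?_ ?_)
    · calc c = F (fun _ => c) := (hid c).symm
        _ ≤ F (fun x => c ⊔ f x) := hF.mono fun a => le_sup_left
    · exact hF.mono fun a => le_sup_right
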